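/- Let α, β, ζ₁, ζ₂ ∈ ℝ, let a, b ∈ ℝ² be linearly independent, and let Imax > 0. Define M₁ := M(α, a, ζ₁) and M₂ := M(β, b, ζ₂). Then { (Tr(M₁ W), Tr(M₂ W)) : W ∈ 𝒲 } = { (α‖x‖² + ⟨a,x⟩ + ζ₁, β‖x‖² + ⟨b,x⟩ + ζ₂) : x ∈ ℝ², ‖x‖ ≤ Imax }. -/

import Mathlib

open scoped RealInnerProductSpace

/-- `M(α, a, ζ)`: the 3×3 symmetric matrix with top-left 2×2 block `α·I₂`,
top-right column `a/2`, bottom-left row `aᵀ/2`, and bottom-right entry `ζ`. -/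
noncomputable def Mmat (α : ℝ) (a : EuclideanSpace ℝ (Fin 2)) (ζ : ℝ) :
    Matrix (Fin 3) (Fin 3) ℝ :=
  !![α, 0, a 0 / 2; 0, α, a 1 / 2; a 0 / 2, a 1 / 2, ζ]

/-- The SDP feasible set `𝒲`: 3×3 real symmetric PSD matrices with
`W₁₁ + W₂₂ ≤ Imax²` and `W₃₃ = 1`. -/
def Wset (Imax : ℝ) : Set (Matrix (Fin 3) (Fin 3) ℝ) :=
  {W | W.PosSemidef ∧ W 0 0 + W 1 1 ≤ Imax ^ 2 ∧ W 2 2 = 1}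

/-!
A matrix `W ∈ 𝒲` enters the two traces only through `t = W₁₁ + W₂₂` and `w = (W₁₃, W₂₃)`, and
the 2×2 principal minors through the entry `W₃₃ = 1` give `‖w‖² ≤ t ≤ Imax²`; conversely `x` is
realised by the rank-one matrix `(x, 1)(x, 1)ᵀ`. To return from such a pair `(t, w)` to a point,
choose `u` with `⟪a, u⟫ = α`, `⟪b, u⟫ = β` (solvable since the Gram matrix of `a, b` is invertible)
and move along `x(s) = w + (t - s) u`: then `α s + ⟪a, x(s)⟫ = α t + ⟪a, w⟫` and likewise for `b`,
and the intermediate value theorem gives `s ∈ [0, t]` with `‖x(s)‖² = s`.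
-/

open Matrix

theorem Matrix.PosSemidef.sq_apply_le_mul {n : Type*} [Fintype n] [DecidableEq n]
    {A : Matrix n n ℝ} (hA : A.PosSemidef) (i j : n) : A i j ^ 2 ≤ A i i * A j j := by
  have hdet := (hA.submatrix ![i, j]).det_nonneg
  have hsymm : A j i = A i j := by simpa using congrFun (congrFun hA.1 i) j
  rw [det_fin_two] at hdet
  simp only [submatrix_apply, cons_val_zero, cons_val_one, hsymm, sub_nonneg] at hdet
  rwa [sq]

theorem exists_norm_add_smul_sq_eq {F : Type*} [SeminormedAddCommGroup F] [NormedSpace ℝ F]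
    (u w : F) {t : ℝ} (hw : ‖w‖ ^ 2 ≤ t) : ∃ s ∈ Set.Icc 0 t, ‖w + (t - s) • u‖ ^ 2 = s := by
  set f : ℝ → ℝ := fun s => ‖w + (t - s) • u‖ ^ 2 - s
  have hf : Continuous f := by fun_prop
  have hf0 : 0 ≤ f 0 := by simp only [f, sub_zero]; positivity
  have hft : f t ≤ 0 := by simpa [f] using hw
  obtain ⟨s, hs, hfs⟩ := intermediate_value_Icc' (by nlinarith [norm_nonneg w]) hf.continuousOn
    ⟨hft, hf0⟩
  exact ⟨s, hs, sub_eq_zero.mp hfs⟩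

section InnerProduct

variable {E : Type*} [NormedAddCommGroup E] [InnerProductSpace ℝ E]

theorem exists_inner_eq_of_linearIndependent {ι : Type*} [Fintype ι] [DecidableEq ι]
    {v : ι → E} (hv : LinearIndependent ℝ v) (c : ι → ℝ) :
    ∃ u : E, ∀ i, ⟪v i, u⟫ = c i := by
  set G := gram ℝ v
  have hG : IsUnit G.det := (posDef_gram_of_linearIndependent hv).isUnit.map detMonoidHom
  refine ⟨∑ j, (G⁻¹ *ᵥ c) j • v j, fun i => ?_⟩
  calc ⟪v i, ∑ j, (G⁻¹ *ᵥ c) j • v j⟫ = (G *ᵥ (G⁻¹ *ᵥ c)) i := by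
        simp [inner_sum, inner_smul_right, mulVec, dotProduct, G, gram_apply, mul_comm]
    _ = c i := by rw [mulVec_mulVec, mul_nonsing_inv _ hG, one_mulVec]

theorem exists_norm_sq_le_of_linearIndependent {ι : Type*} [Fintype ι] [DecidableEq ι]
    {v : ι → E} (hv : LinearIndependent ℝ v) (γ : ι → ℝ) {w : E} {t : ℝ} (hw : ‖w‖ ^ 2 ≤ t) :
    ∃ x : E, ‖x‖ ^ 2 ≤ t ∧ ∀ i, γ i * ‖x‖ ^ 2 + ⟪v i, x⟫ = γ i * t + ⟪v i, w⟫ := by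
  obtain ⟨u, hu⟩ := exists_inner_eq_of_linearIndependent hv γ
  obtain ⟨s, ⟨-, hst⟩, hs⟩ := exists_norm_add_smul_sq_eq u w hw
  refine ⟨w + (t - s) • u, hs.trans_le hst, fun i => ?_⟩
  rw [hs, inner_add_right, inner_smul_right, hu]
  ring

end InnerProduct

theorem trace_Mmat_mul (α ζ : ℝ) (a : EuclideanSpace ℝ (Fin 2)) {W : Matrix (Fin 3) (Fin 3) ℝ}
    (hW : W.IsHermitian) :
    (Mmat α a ζ * W).trace = α * (W 0 0 + W 1 1) + ⟪a, !₂[W 0 2, W 1 2]⟫ + ζ * W 2 2 := by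
  have h20 : W 2 0 = W 0 2 := by simpa using congrFun (congrFun hW 0) 2
  have h21 : W 2 1 = W 1 2 := by simpa using congrFun (congrFun hW 1) 2
  simp only [trace, Mmat, cons_mul, empty_mul, Equiv.symm_apply_apply, diag_apply, of_apply,
    cons_val', vecMul, dotProduct, Fin.sum_univ_three, cons_val_zero, cons_val_one, cons_val,
    cons_val_fin_one, h20, h21, PiLp.inner_apply, RCLike.inner_apply, Real.ringHom_apply,
    Fin.sum_univ_two]
  ring

theorem norm_sq_le_of_mem_Wset {Imax : ℝ} {W : Matrix (Fin 3) (Fin 3) ℝ} (hW : W ∈ Wset Imax) :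
    ‖!₂[W 0 2, W 1 2]‖ ^ 2 ≤ W 0 0 + W 1 1 := by
  obtain ⟨hpsd, -, h22⟩ := hW
  have h0 := hpsd.sq_apply_le_mul 0 2
  have h1 := hpsd.sq_apply_le_mul 1 2
  rw [h22, mul_one] at h0 h1
  simpa [EuclideanSpace.norm_sq_eq, Fin.sum_univ_two] using add_le_add h0 h1

theorem vecMulVec_mem_Wset {Imax : ℝ} {x : EuclideanSpace ℝ (Fin 2)} (hx : ‖x‖ ≤ Imax) :
    vecMulVec ![x 0, x 1, 1] ![x 0, x 1, 1] ∈ Wset Imax := by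
  refine ⟨by simpa using posSemidef_vecMulVec_self_star ![x 0, x 1, 1], ?_, by simp⟩
  have : ‖x‖ ^ 2 ≤ Imax ^ 2 := pow_le_pow_left₀ (norm_nonneg x) hx 2
  simpa [EuclideanSpace.norm_sq_eq, Fin.sum_univ_two, vecMulVec_apply, ← sq] using this

theorem trace_Mmat_mul_vecMulVec (α ζ : ℝ) (a x : EuclideanSpace ℝ (Fin 2)) :
    (Mmat α a ζ * vecMulVec ![x 0, x 1, 1] ![x 0, x 1, 1]).trace = α * ‖x‖ ^ 2 + ⟪a, x⟫ + ζ := by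
  rw [trace_Mmat_mul _ _ _ (by simpa using (posSemidef_vecMulVec_self_star ![x 0, x 1, 1]).1)]
  simp [EuclideanSpace.norm_sq_eq, PiLp.inner_apply, Fin.sum_univ_two, vecMulVec_apply, ← sq]

/-- exactness of the semidefinite description of the feasible
output set: the SDP image `{(Tr(M₁W), Tr(M₂W)) : W ∈ 𝒲}` equals the image of
the current ball under the pair of quadratic output maps. -/
theorem stmt8 (α β ζ₁ ζ₂ : ℝ) (a b : EuclideanSpace ℝ (Fin 2))
    (hab : LinearIndependent ℝ ![a, b]) (Imax : ℝ) (hI : 0 < Imax) :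
    {p : ℝ × ℝ | ∃ W ∈ Wset Imax,
        p = ((Mmat α a ζ₁ * W).trace, (Mmat β b ζ₂ * W).trace)} =
    {p : ℝ × ℝ | ∃ x : EuclideanSpace ℝ (Fin 2), ‖x‖ ≤ Imax ∧
        p = (α * ‖x‖ ^ 2 + ⟪a, x⟫ + ζ₁, β * ‖x‖ ^ 2 + ⟪b, x⟫ + ζ₂)} := by
  ext p
  constructor
  · rintro ⟨W, hW, rfl⟩
    obtain ⟨x, hxt, hx⟩ :=
      exists_norm_sq_le_of_linearIndependent hab ![α, β] (norm_sq_le_of_mem_Wset hW)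
    have hxI : ‖x‖ ≤ Imax := (pow_le_pow_iff_left₀ (norm_nonneg x) hI.le two_ne_zero).mp
      (hxt.trans hW.2.1)
    refine ⟨x, hxI, ?_⟩
    rw [trace_Mmat_mul _ _ _ hW.1.1, trace_Mmat_mul _ _ _ hW.1.1, hW.2.2]
    simpa [mul_one, ← add_assoc] using ⟨(hx 0).symm, (hx 1).symm⟩
  · rintro ⟨x, hx, rfl⟩
    exact ⟨_, vecMulVec_mem_Wset hx, by
      rw [trace_Mmat_mul_vecMulVec, trace_Mmat_mul_vecMulVec]⟩
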